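/- arXiv:1607.05542 — 3 statements merged into one kernel-verified Lean document; each statement's English description precedes it below -/
import Mathlib

section
/- Let ν be a probability measure on a measurable space, let T be a measurable map with pushforward θ = T∗ν, and suppose θ is absolutely continuous with respect to ν with density L = dθ/dν. If there exists a nonnegative random variable ρ with E_ν[ρ] = 1 such that (L ∘ T)·ρ = 1 ν-a.s., then the relative entropy H(θ|ν) = E_ν[L log L] equals E_ν[−log ρ]. -/
open MeasureTheory Real

theorem integral_withDensity_ofReal {α : Type*} [MeasurableSpace α] {μ : Measure α}
    {L : α → ℝ} (hL : Measurable L) (hL0 : 0 ≤ L) (f : α → ℝ) :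
    ∫ x, f x ∂μ.withDensity (fun x => ENNReal.ofReal (L x)) = ∫ x, L x * f x ∂μ := by
  rw [integral_withDensity_eq_integral_toReal_smul hL.ennreal_ofReal
    (.of_forall fun _ => ENNReal.ofReal_lt_top)]
  simp only [ENNReal.toReal_ofReal (hL0 _), smul_eq_mul]

theorem integral_comp_eq_integral_density_mul {Ω : Type*} [MeasurableSpace Ω] {ν : Measure Ω}
    {T : Ω → Ω} (hT : Measurable T) {L : Ω → ℝ} (hL : Measurable L) (hL0 : 0 ≤ L)
    (hdens : ν.map T = ν.withDensity (fun ω => ENNReal.ofReal (L ω)))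
    {g : Ω → ℝ} (hg : AEStronglyMeasurable g (ν.map T)) :
    ∫ ω, g (T ω) ∂ν = ∫ ω, L ω * g ω ∂ν := by
  rw [← integral_map hT.aemeasurable hg, hdens, integral_withDensity_ofReal hL hL0]

theorem stmt_2_general {Ω : Type*} [MeasurableSpace Ω] (ν : Measure Ω)
    (T : Ω → Ω) (hT : Measurable T)
    (L : Ω → ℝ) (hLmeas : Measurable L) (hLpos : 0 ≤ L)
    (hdens : ν.map T = ν.withDensity (fun ω => ENNReal.ofReal (L ω)))
    (ρ : Ω → ℝ)
    (hkey : ∀ᵐ ω ∂ν, L (T ω) * ρ ω = 1) :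
    ∫ ω, L ω * log (L ω) ∂ν = ∫ ω, -log (ρ ω) ∂ν := by
  calc ∫ ω, L ω * log (L ω) ∂ν = ∫ ω, log (L (T ω)) ∂ν :=
        (integral_comp_eq_integral_density_mul hT hLmeas hLpos hdens
          hLmeas.log.aestronglyMeasurable).symm
    _ = ∫ ω, -log (ρ ω) ∂ν :=
        integral_congr_ae <| hkey.mono fun ω h => by
          simp only [eq_inv_of_mul_eq_one_left h, log_inv]

/-- If `θ = T∗ν` has density `L` w.r.t. `ν` and there exists `ρ ≥ 0` with `E_ν[ρ] = 1`
such that `(L ∘ T) ρ = 1` ν-a.s., then `H(θ|ν) = E_ν[L log L] = E_ν[-log ρ]`. -/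
theorem stmt_2 {Ω : Type*} [MeasurableSpace Ω] (ν : Measure Ω) [IsProbabilityMeasure ν]
    (T : Ω → Ω) (hT : Measurable T)
    (L : Ω → ℝ) (hLmeas : Measurable L) (hLpos : 0 ≤ L)
    (hdens : ν.map T = ν.withDensity (fun ω => ENNReal.ofReal (L ω)))
    (ρ : Ω → ℝ) (hρmeas : Measurable ρ) (hρpos : 0 ≤ ρ)
    (hρmean : ∫ ω, ρ ω ∂ν = 1)
    (hkey : ∀ᵐ ω ∂ν, L (T ω) * ρ ω = 1)
    (hint1 : Integrable (fun ω => L ω * log (L ω)) ν)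
    (hint2 : Integrable (fun ω => log (ρ ω)) ν) :
    ∫ ω, L ω * log (L ω) ∂ν = ∫ ω, -log (ρ ω) ∂ν :=
  stmt_2_general ν T hT L hLmeas hLpos hdens ρ hkey
end

section
/- In the abstract framework (ν a probability on Wiener space, β a ν-Brownian motion with the same filtration as the coordinate process W, and (W^u) perturbations satisfying the Girsanov identity E_ν[f] = E_ν[f∘W^u · ρ(−δ_β u)] for bounded drifts u), for every u with a.s. bounded adapted density the relative entropy satisfies H(W^u∗ν | ν) ≤ ½ E_ν[|u|_H²], where |u|_H² = ∫₀¹|u̇(s)|²ds. -/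
open MeasureTheory Real
open scoped Classical

/-- Relative entropy `H(θ|ν) = E_θ[log (dθ/dν)]`, with value `+∞` when `θ` is not
absolutely continuous w.r.t. `ν` or the log-likelihood ratio is not integrable. -/
noncomputable def relEntropy {Ω : Type*} [MeasurableSpace Ω] (θ ν : Measure Ω) : EReal :=
  if θ ≪ ν ∧ Integrable (llr θ ν) θ then ((∫ ω, llr θ ν ω ∂θ : ℝ) : EReal) else ⊤

/-
By the Girsanov identity, `W^u` pushes `ν̃ = ρ ν` forward to `ν`, so `W^u∗ν` and `ν` are the
images of `ν` and `ν̃` under the same map. The data processing inequality then bounds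
`H(W^u∗ν | ν)` by `H(ν | ν̃) = E_ν[-log ρ]`, which equals `½ E_ν[|u|_H²]`.
-/

open InformationTheory Set

section

variable {Ω : Type*} [MeasurableSpace Ω]

lemma coe_klDiv_eq_integral_llr {μ ν : Measure Ω} [IsFiniteMeasure μ] [IsFiniteMeasure ν]
    (hμν : μ ≪ ν) (h_int : Integrable (llr μ ν) μ) (h_univ : μ univ = ν univ) :
    (klDiv μ ν : EReal) = ((∫ x, llr μ ν x ∂μ : ℝ) : EReal) := by
  rw [← toReal_klDiv_of_measure_eq hμν h_univ, ← EReal.coe_ennreal_toReal (klDiv_ne_top hμν h_int)]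

lemma relEntropy_eq_klDiv {μ ν : Measure Ω} [IsFiniteMeasure μ] [IsFiniteMeasure ν]
    (h_univ : μ univ = ν univ) : relEntropy μ ν = klDiv μ ν := by
  unfold relEntropy
  split_ifs with h
  · exact (coe_klDiv_eq_integral_llr h.1 h.2 h_univ).symm
  · rw [klDiv_eq_top_iff.mpr fun hμν h_int ↦ h ⟨hμν, h_int⟩]
    rfl

variable {ν : Measure Ω} {ρ : Ω → ℝ}

lemma absolutelyContinuous_withDensity_ofReal (hρ : AEMeasurable ρ ν)
    (hρ_pos : ∀ᵐ ω ∂ν, 0 < ρ ω) : ν ≪ ν.withDensity fun ω ↦ ENNReal.ofReal (ρ ω) :=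
  withDensity_absolutelyContinuous' hρ.ennreal_ofReal
    (by filter_upwards [hρ_pos] with ω hω using (ENNReal.ofReal_pos.mpr hω).ne')

lemma llr_withDensity_ofReal_right [SigmaFinite ν] (hρ : AEMeasurable ρ ν)
    (hρ_pos : ∀ᵐ ω ∂ν, 0 < ρ ω) :
    llr ν (ν.withDensity fun ω ↦ ENNReal.ofReal (ρ ω)) =ᵐ[ν] fun ω ↦ -log (ρ ω) := by
  filter_upwards [neg_llr (absolutelyContinuous_withDensity_ofReal hρ hρ_pos),
    Measure.rnDeriv_withDensity₀ ν hρ.ennreal_ofReal, hρ_pos] with ω h_neg h_rnDeriv hω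
  rw [Pi.neg_apply, neg_eq_iff_eq_neg] at h_neg
  rw [h_neg, llr, h_rnDeriv, ENNReal.toReal_ofReal hω.le]

end

theorem stmt_16_general {Ω : Type*} [MeasurableSpace Ω] (ν : Measure Ω) [IsProbabilityMeasure ν]
    (Wu : Ω → Ω) (hWu : Measurable Wu)
    (ρ : Ω → ℝ) (hρmeas : Measurable ρ) (hρpos : ∀ᵐ ω ∂ν, 0 < ρ ω)
    (hlaw : Measure.map Wu (ν.withDensity (fun ω => ENNReal.ofReal (ρ ω))) = ν)
    (q : Ω → ℝ)
    (hρlog : Integrable (fun ω => log (ρ ω)) ν)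
    (hρq : ∫ ω, -log (ρ ω) ∂ν = (1 / 2) * ∫ ω, q ω ∂ν) :
    relEntropy (ν.map Wu) ν ≤ (((1 / 2) * ∫ ω, q ω ∂ν : ℝ) : EReal) := by
  set ν' := ν.withDensity fun ω ↦ ENNReal.ofReal (ρ ω)
  have : IsProbabilityMeasure (ν.map Wu) := Measure.isProbabilityMeasure_map hWu.aemeasurable
  have : IsProbabilityMeasure ν' :=
    (Measure.isProbabilityMeasure_map_iff hWu.aemeasurable).mp (hlaw ▸ inferInstance)
  have hllr := llr_withDensity_ofReal_right hρmeas.aemeasurable hρpos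
  calc relEntropy (ν.map Wu) ν
      = klDiv (ν.map Wu) (ν'.map Wu) := by rw [hlaw]; exact relEntropy_eq_klDiv (by simp)
    _ ≤ klDiv ν ν' := EReal.coe_ennreal_le_coe_ennreal_iff.mpr (klDiv_map_le ν ν' hWu)
    _ = ((∫ ω, -log (ρ ω) ∂ν : ℝ) : EReal) := by
      rw [coe_klDiv_eq_integral_llr
          (absolutelyContinuous_withDensity_ofReal hρmeas.aemeasurable hρpos)
          (hρlog.neg.congr hllr.symm) (by simp),
        integral_congr_ae hllr]
    _ = (((1 / 2) * ∫ ω, q ω ∂ν : ℝ) : EReal) := by rw [hρq]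

/-- In the abstract framework, for a bounded adapted drift `u`, the Girsanov identity
(the law of `W^u` under `dν̃^u = ρ(-δ_β u) dν` is the law of `W` under `ν`) together with
`E_ν[-log ρ(-δ_β u)] = ½ E_ν[|u|_H²]` yields `H(W^u∗ν | ν) ≤ ½ E_ν[|u|_H²]`.
Here `q = |u|_H² = ∫₀¹ |u̇(s)|² ds ≥ 0`. -/
theorem stmt_16 {Ω : Type*} [MeasurableSpace Ω] (ν : Measure Ω) [IsProbabilityMeasure ν]
    (Wu : Ω → Ω) (hWu : Measurable Wu)
    (ρ : Ω → ℝ) (hρmeas : Measurable ρ) (hρpos : ∀ᵐ ω ∂ν, 0 < ρ ω)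
    (hρmean : ∫ ω, ρ ω ∂ν = 1)
    (hlaw : Measure.map Wu (ν.withDensity (fun ω => ENNReal.ofReal (ρ ω))) = ν)
    (q : Ω → ℝ) (hq : 0 ≤ q) (hqint : Integrable q ν)
    (hρlog : Integrable (fun ω => log (ρ ω)) ν)
    (hρq : ∫ ω, -log (ρ ω) ∂ν = (1 / 2) * ∫ ω, q ω ∂ν) :
    relEntropy (ν.map Wu) ν ≤ (((1 / 2) * ∫ ω, q ω ∂ν : ℝ) : EReal) :=
  stmt_16_general ν Wu hWu ρ hρmeas hρpos hlaw q hρlog hρq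
end

section
/- Suppose f : Ω → ℝ is measurable on a probability space (Ω, ν) with E_ν[|f|(1+e^{−f})] < ∞, and suppose that for a family of measurable maps (W^u) indexed by drifts u ∈ D with H(W^u∗ν|ν) ≤ ½E_ν[|u|_H²] and E_{W^u∗ν}[f] = E_ν[f ∘ W^u]. Then −log E_ν[e^{−f}] ≤ inf_{u∈D} E_ν[f ∘ W^u + ½|u|_H²]. -/
/-!
Donsker–Varadhan: for `θ ≪ ν`, Gibbs' inequality applied to `θ` and the tilted measure
`ν.tilted (-f) ∝ e^{-f} ν` gives `-log E_ν[e^{-f}] ≤ E_θ[f] + H(θ|ν)`. Taking `θ = W^u∗ν`, the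
change of variables and the entropy bound turn the right-hand side into `E_ν[f ∘ W^u + ½|u|_H²]`.
-/

open MeasureTheory Real

lemma Real.exp_neg_le_exp_one_add_abs_mul (x : ℝ) :
    exp (-x) ≤ exp 1 + |x| * (1 + exp (-x)) := by
  have hexp := (exp_pos (-x)).le
  rcases le_or_gt 1 |x| with hx | hx
  · nlinarith [exp_pos 1, abs_nonneg x]
  · have : exp (-x) ≤ exp 1 := exp_le_exp.mpr (by linarith [neg_abs_le x])
    nlinarith [abs_nonneg x]

lemma MeasureTheory.Integrable.exp_neg_of_abs_mul_one_add_exp_neg {α : Type*}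
    [MeasurableSpace α] {μ : Measure α} [IsFiniteMeasure μ] {f : α → ℝ} (hf : Measurable f)
    (h : Integrable (fun x ↦ |f x| * (1 + exp (-f x))) μ) :
    Integrable (fun x ↦ exp (-f x)) μ := by
  refine ((integrable_const (exp 1)).add h).mono' hf.neg.exp.aestronglyMeasurable
    (Filter.Eventually.of_forall fun x ↦ ?_)
  rw [norm_of_nonneg (exp_pos _).le]
  exact exp_neg_le_exp_one_add_abs_mul (f x)

lemma MeasureTheory.integral_sub_integral_llr_le_log_integral_exp {α : Type*}
    [MeasurableSpace α] {μ θ : Measure α} [IsProbabilityMeasure μ] [IsProbabilityMeasure θ]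
    {g : α → ℝ} (hθμ : θ ≪ μ) (hg : Integrable g θ)
    (hexp : Integrable (fun x ↦ exp (g x)) μ) (hllr : Integrable (llr θ μ) θ) :
    ∫ x, g x ∂θ - ∫ x, llr θ μ x ∂θ ≤ log (∫ x, exp (g x) ∂μ) := by
  have : IsProbabilityMeasure (μ.tilted g) := isProbabilityMeasure_tilted hexp
  have hgibbs := InformationTheory.integral_llr_add_sub_measure_univ_nonneg
    (hθμ.trans (absolutelyContinuous_tilted hexp))
    (integrable_llr_tilted_right hθμ hg hllr hexp)
  rw [integral_llr_tilted_right hθμ hg hexp hllr] at hgibbs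
  simp only [probReal_univ] at hgibbs
  linarith

theorem stmt_17_general {Ω : Type*} [MeasurableSpace Ω] (ν : Measure Ω) [IsProbabilityMeasure ν]
    {ι : Type*} [Nonempty ι]
    (f : Ω → ℝ) (hf : Measurable f)
    (hint : Integrable (fun ω => |f ω| * (1 + exp (-f ω))) ν)
    (W : ι → Ω → Ω) (hW : ∀ u, Measurable (W u))
    (nu : ι → Ω → ℝ) (hnuint : ∀ u, Integrable (nu u) ν)
    (hac : ∀ u, ν.map (W u) ≪ ν)
    (hllr : ∀ u, Integrable (llr (ν.map (W u)) ν) (ν.map (W u)))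
    (hent : ∀ u, ∫ ω, llr (ν.map (W u)) ν ω ∂(ν.map (W u)) ≤ (1 / 2) * ∫ ω, nu u ω ∂ν)
    (hf' : ∀ u, Integrable (fun ω => f (W u ω)) ν)
    (hchange : ∀ u, ∫ ω, f ω ∂(ν.map (W u)) = ∫ ω, f (W u ω) ∂ν) :
    -log (∫ ω, exp (-f ω) ∂ν) ≤ ⨅ u : ι, ∫ ω, (f (W u ω) + nu u ω / 2) ∂ν := by
  refine le_ciInf fun u ↦ ?_
  have : IsProbabilityMeasure (ν.map (W u)) :=
    Measure.isProbabilityMeasure_map (hW u).aemeasurable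
  have hf_map : Integrable f (ν.map (W u)) :=
    (integrable_map_measure hf.aestronglyMeasurable (hW u).aemeasurable).mpr (hf' u)
  have hDV := integral_sub_integral_llr_le_log_integral_exp (g := fun ω ↦ -f ω) (hac u)
    hf_map.neg (hint.exp_neg_of_abs_mul_one_add_exp_neg hf) (hllr u)
  rw [integral_neg, hchange u] at hDV
  rw [integral_add (hf' u) ((hnuint u).div_const 2), integral_div]
  linarith [hent u]

/-- The easy inequality of the variational representation: if for each drift `u` in a
nonempty family `D`, the pushforward `θ_u = W^u∗ν` satisfies `H(θ_u|ν) ≤ ½ E_ν[|u|_H²]`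
and `E_{θ_u}[f] = E_ν[f ∘ W^u]`, then
`-log E_ν[e^{-f}] ≤ inf_u E_ν[f ∘ W^u + ½ |u|_H²]`.
Here `nu u = |u|_H²` denotes the (pathwise) squared Cameron–Martin norm of `u`. -/
theorem stmt_17 {Ω : Type*} [MeasurableSpace Ω] (ν : Measure Ω) [IsProbabilityMeasure ν]
    {ι : Type*} [Nonempty ι]
    (f : Ω → ℝ) (hf : Measurable f)
    (hint : Integrable (fun ω => |f ω| * (1 + exp (-f ω))) ν)
    (W : ι → Ω → Ω) (hW : ∀ u, Measurable (W u))
    (nu : ι → Ω → ℝ) (hnu : ∀ u, 0 ≤ nu u) (hnuint : ∀ u, Integrable (nu u) ν)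
    (hac : ∀ u, ν.map (W u) ≪ ν)
    (hllr : ∀ u, Integrable (llr (ν.map (W u)) ν) (ν.map (W u)))
    (hent : ∀ u, ∫ ω, llr (ν.map (W u)) ν ω ∂(ν.map (W u)) ≤ (1 / 2) * ∫ ω, nu u ω ∂ν)
    (hf' : ∀ u, Integrable (fun ω => f (W u ω)) ν)
    (hchange : ∀ u, ∫ ω, f ω ∂(ν.map (W u)) = ∫ ω, f (W u ω) ∂ν) :
    -log (∫ ω, exp (-f ω) ∂ν) ≤ ⨅ u : ι, ∫ ω, (f (W u ω) + nu u ω / 2) ∂ν :=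
  stmt_17_general ν f hf hint W hW nu hnuint hac hllr hent hf' hchange
end
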